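/- In the field ℚ(x_1,x_2) of rational functions in two variables over ℚ, the following identity holds: (x_1 − x_2)·1/((1−x_1^4)(1−x_1^3x_2)(1−x_1^2x_2^2)(1−x_1x_2^3)(1−x_2^4)) = x_1·h(x_1, x_1x_2) − x_2·h(x_2, x_1x_2), where h(v_1,v_2) = (1 − v_1^2v_2 + v_1^4v_2^2)/((1−v_1^4)(1−v_1^2v_2)(1−v_2^4)(1−v_2^6)). (This expresses that h is the multiplicity series M' of the Hilbert series of the symmetric algebra K[W(4)] of the irreducible GL_2-module W(4).) -/

import Mathlib

/-!
Every denominator is of the form `1 - x₁ᵃx₂ᵇ` with `a + b > 0`, a polynomial with constant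
coefficient `1` and hence nonzero in `ℚ(x₁,x₂)`; after clearing them the identity is a
polynomial identity.
-/

/-- The candidate multiplicity series `M'(H(K[W(4)]); v₁, v₂)`. -/
noncomputable def multSeriesW4 (v1 v2 : FractionRing (MvPolynomial (Fin 2) ℚ)) :
    FractionRing (MvPolynomial (Fin 2) ℚ) :=
  (1 - v1 ^ 2 * v2 + v1 ^ 4 * v2 ^ 2) /
    ((1 - v1 ^ 4) * (1 - v1 ^ 2 * v2) * (1 - v2 ^ 4) * (1 - v2 ^ 6))

open MvPolynomial

theorem MvPolynomial.one_sub_X_pow_mul_X_pow_ne_zero {R σ : Type*} [CommRing R] [Nontrivial R]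
    (i j : σ) {a b : ℕ} (hab : a + b ≠ 0) : (1 : MvPolynomial σ R) - X i ^ a * X j ^ b ≠ 0 := by
  have hcoeff : constantCoeff ((1 : MvPolynomial σ R) - X i ^ a * X j ^ b) = 1 := by
    rcases Nat.eq_zero_or_pos a with rfl | ha
    · simp [zero_pow (by omega : b ≠ 0)]
    · simp [zero_pow ha.ne']
  intro h
  simp [h] at hcoeff

theorem sub_mul_one_div_eq_multSeriesW4 (x1 x2 : FractionRing (MvPolynomial (Fin 2) ℚ))
    (h40 : 1 - x1 ^ 4 ≠ 0) (h31 : 1 - x1 ^ 3 * x2 ≠ 0) (h22 : 1 - x1 ^ 2 * x2 ^ 2 ≠ 0)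
    (h13 : 1 - x1 * x2 ^ 3 ≠ 0) (h04 : 1 - x2 ^ 4 ≠ 0) (h44 : 1 - x1 ^ 4 * x2 ^ 4 ≠ 0)
    (h66 : 1 - x1 ^ 6 * x2 ^ 6 ≠ 0) :
    (x1 - x2) *
        (1 / ((1 - x1 ^ 4) * (1 - x1 ^ 3 * x2) * (1 - x1 ^ 2 * x2 ^ 2) *
          (1 - x1 * x2 ^ 3) * (1 - x2 ^ 4))) =
      x1 * multSeriesW4 x1 (x1 * x2) - x2 * multSeriesW4 x2 (x1 * x2) := by
  have e31 : 1 - x1 ^ 2 * (x1 * x2) = 1 - x1 ^ 3 * x2 := by ring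
  have e13 : 1 - x2 ^ 2 * (x1 * x2) = 1 - x1 * x2 ^ 3 := by ring
  have e44 : 1 - (x1 * x2) ^ 4 = 1 - x1 ^ 4 * x2 ^ 4 := by ring
  have e66 : 1 - (x1 * x2) ^ 6 = 1 - x1 ^ 6 * x2 ^ 6 := by ring
  rw [multSeriesW4, multSeriesW4, e31, e13, e44, e66]
  field_simp
  ring

/-- In `ℚ(x₁,x₂)` one has
`(x₁ − x₂)/((1−x₁⁴)(1−x₁³x₂)(1−x₁²x₂²)(1−x₁x₂³)(1−x₂⁴)) = x₁·h(x₁,x₁x₂) − x₂·h(x₂,x₁x₂)`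
with `h(v₁,v₂) = (1 − v₁²v₂ + v₁⁴v₂²)/((1−v₁⁴)(1−v₁²v₂)(1−v₂⁴)(1−v₂⁶))`, i.e. `h` is the
multiplicity series of the Hilbert series of the symmetric algebra `K[W(4)]`. -/
theorem multiplicity_series_KW4
    (x1 x2 : FractionRing (MvPolynomial (Fin 2) ℚ))
    (hx1 : x1 = algebraMap (MvPolynomial (Fin 2) ℚ) _ (MvPolynomial.X 0))
    (hx2 : x2 = algebraMap (MvPolynomial (Fin 2) ℚ) _ (MvPolynomial.X 1)) :
    (x1 - x2) *
        (1 / ((1 - x1 ^ 4) * (1 - x1 ^ 3 * x2) * (1 - x1 ^ 2 * x2 ^ 2) *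
          (1 - x1 * x2 ^ 3) * (1 - x2 ^ 4))) =
      x1 * multSeriesW4 x1 (x1 * x2) - x2 * multSeriesW4 x2 (x1 * x2) := by
  have hne : ∀ a b : ℕ, a + b ≠ 0 → 1 - x1 ^ a * x2 ^ b ≠ 0 := fun a b hab => by
    subst hx1 hx2
    have hpoly := one_sub_X_pow_mul_X_pow_ne_zero (R := ℚ) (0 : Fin 2) 1 hab
    rw [← map_ne_zero_iff _ (IsFractionRing.injective _ (FractionRing (MvPolynomial (Fin 2) ℚ)))]
      at hpoly
    simpa using hpoly
  exact sub_mul_one_div_eq_multSeriesW4 x1 x2 (by simpa using hne 4 0 (by norm_num))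
    (by simpa using hne 3 1 (by norm_num)) (hne 2 2 (by norm_num))
    (by simpa using hne 1 3 (by norm_num)) (by simpa using hne 0 4 (by norm_num))
    (hne 4 4 (by norm_num)) (hne 6 6 (by norm_num))
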